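/- Let h : [0, ∞) → [0, ∞) be bijective, strictly increasing, concave, with h(0) = 0, differentiable on (0, ∞) with h′ > 0 on (0, ∞). Let κ ≥ 1 and let f : E → ℝ be convex with nonempty minimizer set X* and minimum value f*, satisfying f(x) − f* ≤ h(d(x, X*)²) and f(x) − f* ≥ h(d(x, X*)²/κ) for all x ∈ E. Set m = ⌊κ·e⌋ − 1 (so m ≥ 1). Consider the restarted heavy-ball procedure: z_0 = x_0, and for each q, z_{q+1} is the m-th iterate of the heavy-ball method for h-RG+ functions started at z_q, i.e. there exist points and subgradients with, for 1 ≤ k ≤ m, g_{k−1} ∈ ∂f(x_{k−1}) (g_{k−1} = 0 whenever f(x_{k−1}) = f*), γ_{k−1} = 1/(2(k+1)·h′(h⁻¹(f(x_{k−1}) − f*))) if f(x_{k−1}) > f* and γ_{k−1} = 0 otherwise, x_k = x_{k−1} − γ_{k−1}·g_{k−1} + ((k−1)/(k+1))·(x_{k−1} − x_{k−2}), with x_0 = z_q and x_m = z_{q+1}. Then for every q ∈ ℕ: d(z_q, X*)² ≤ (1 − 1/(κ·e))^{q·m}·d(x_0, X*)². -/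

import Mathlib

open scoped RealInnerProductSpace
open Metric Set Real

/-!
Fix `x* ∈ X*` and, along one run of the heavy-ball method, write `r_k = h⁻¹(f(x_k) - f*)` and
`z_k = x_k + k (x_k - x_{k-1})`. The step size turns `z_{k+1} = z_k - g_k / (2 h'(r_k))` into a
plain subgradient step, and testing the subgradient inequality at `x* + g_k / (2 h'(r_k))` against
`h`-RG+ and the tangent line of the concave `h` at `r_k` bounds `‖g_k‖²`; together they make
`‖z_k - x*‖² + k r_{k-1}` nonincreasing. Since `x_m` is the average of `z_m` and `x_{m-1}` with
weights `1/(m+1)` and `m/(m+1)`, convexity of `d(·, X*)` and the lower growth bound at `x_{m-1}`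
give `(m+1) d(x_m, X*)² ≤ κ d(x_0, X*)²`. For `m = ⌊κe⌋ - 1` one has
`κ ≤ (m+1)(1 - 1/(κe))^m`, so every restart contracts `d(·, X*)²` by `(1 - 1/(κe))^m`.
-/

lemma ConcaveOn.le_add_mul_sub_of_hasDerivAt {S : Set ℝ} {f : ℝ → ℝ} {f' r a : ℝ}
    (hf : ConcaveOn ℝ S f) (hr : r ∈ S) (ha : a ∈ S) (hf' : HasDerivAt f f' r) :
    f a ≤ f r + f' * (a - r) := by
  rcases lt_trichotomy a r with har | rfl | hra
  · have := hf.le_slope_of_hasDerivAt ha hr har hf'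
    rw [slope_def_field, le_div_iff₀ (sub_pos.2 har)] at this
    linarith
  · simp
  · have := hf.slope_le_of_hasDerivAt hr ha hra hf'
    rw [slope_def_field, div_le_iff₀ (sub_pos.2 hra)] at this
    linarith

lemma mul_exp_neg_one_le_succ_mul_one_sub_inv_pow {n : ℝ} {m : ℕ} (hn : 1 < n)
    (hm : m = ⌊n⌋₊ - 1) : n * exp (-1) ≤ (m + 1) * (1 - 1 / n) ^ m := by
  have hfloor : ⌊n⌋₊ = m + 1 := by
    have := Nat.floor_pos.2 hn.le
    omega
  have hmn : (m : ℝ) + 1 ≤ n := by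
    exact_mod_cast hfloor ▸ Nat.floor_le (by linarith)
  have hnm : n < m + 2 := by
    have := Nat.lt_floor_add_one n
    rw [hfloor] at this
    push_cast at this
    linarith
  have hn1 : 0 < n - 1 := by linarith
  have hbase : exp (-(1 / (n - 1))) ≤ 1 - 1 / n := by
    have hinv : (1 - 1 / n)⁻¹ = 1 / (n - 1) + 1 := by field_simp; ring
    rw [exp_neg, inv_le_comm₀ (exp_pos _) (by rw [one_sub_div (by linarith)]; positivity), hinv]
    exact add_one_le_exp _
  have hpow : exp (-(m / (n - 1))) ≤ (1 - 1 / n) ^ m :=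
    calc exp (-(m / (n - 1))) = exp (-(1 / (n - 1))) ^ m := by
          rw [← exp_nat_mul]; congr 1; ring
      _ ≤ (1 - 1 / n) ^ m := pow_le_pow_left₀ (exp_pos _).le hbase m
  -- `n / (m + 1) = 1 + θ / (m + 1) ≤ 1 + θ / (n - 1)` for the fractional part `θ = n - m - 1`
  have hlin : n ≤ (m + 1) * ((n - m - 1) / (n - 1) + 1) := by
    have : (m + 1) * ((n - m - 1) / (n - 1) + 1) - n
        = (n - m - 1) * (m + 2 - n) / (n - 1) := by
      field_simp; ring
    have : 0 ≤ (n - m - 1) * (m + 2 - n) / (n - 1) := by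
      apply div_nonneg (mul_nonneg _ _) hn1.le <;> linarith
    linarith
  calc n * exp (-1) ≤ (m + 1) * exp ((n - m - 1) / (n - 1)) * exp (-1) := by
        gcongr
        exact hlin.trans (by gcongr; exact add_one_le_exp _)
    _ = (m + 1) * exp (-(m / (n - 1))) := by
        rw [mul_assoc, ← exp_add]; congr 2; field_simp; ring
    _ ≤ (m + 1) * (1 - 1 / n) ^ m := by gcongr

lemma Convex.convexOn_infDist {E : Type*} [SeminormedAddCommGroup E] [NormedSpace ℝ E]
    {s : Set E} (hs : Convex ℝ s) : ConvexOn ℝ univ (infDist · s) := by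
  refine ⟨convex_univ, fun x _ y _ a b ha hb hab => ?_⟩
  rcases s.eq_empty_or_nonempty with rfl | hne
  · simp
  refine le_of_forall_pos_le_add fun ε hε => ?_
  obtain ⟨p, hp, hxp⟩ := (infDist_lt_iff hne).1 (lt_add_of_pos_right (infDist x s) hε)
  obtain ⟨q, hq, hyq⟩ := (infDist_lt_iff hne).1 (lt_add_of_pos_right (infDist y s) hε)
  calc infDist (a • x + b • y) s ≤ dist (a • x + b • y) (a • p + b • q) :=
        infDist_le_dist_of_mem (hs hp hq ha hb hab)
    _ = ‖a • (x - p) + b • (y - q)‖ := by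
        rw [dist_eq_norm, smul_sub, smul_sub]; congr 1; abel
    _ ≤ a * dist x p + b * dist y q := by
        refine (norm_add_le _ _).trans_eq ?_
        rw [norm_smul, norm_smul, Real.norm_of_nonneg ha, Real.norm_of_nonneg hb,
          dist_eq_norm, dist_eq_norm]
    _ ≤ a * (infDist x s + ε) + b * (infDist y s + ε) := by gcongr
    _ = a * infDist x s + b * infDist y s + ε := by linear_combination ε * hab

lemma Metric.le_mul_infDist_sq {α : Type*} [PseudoMetricSpace α] {s : Set α} {x : α} {c D : ℝ}
    (hs : s.Nonempty) (hc : 0 ≤ c) (h : ∀ y ∈ s, D ≤ c * dist x y ^ 2) :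
    D ≤ c * infDist x s ^ 2 := by
  by_contra! hlt
  have hcont : Continuous fun t : ℝ => c * t ^ 2 := by fun_prop
  obtain ⟨r, hr, hrD⟩ := ((hcont.tendsto _).eventually (gt_mem_nhds hlt)).exists_gt
  obtain ⟨y, hy, hyr⟩ := (infDist_lt_iff hs).1 hr
  have : c * dist x y ^ 2 ≤ c * r ^ 2 := by gcongr
  linarith [h y hy]

lemma ConvexOn.convex_setOf_forall_le {E : Type*} [AddCommGroup E] [Module ℝ E] {f : E → ℝ}
    (hf : ConvexOn ℝ univ f) : Convex ℝ {z | ∀ y, f z ≤ f y} := by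
  have : {z | ∀ y, f z ≤ f y} = ⋂ y, {z | z ∈ univ ∧ f z ≤ f y} := by ext; simp
  exact this ▸ convex_iInter fun y => hf.convex_le (f y)

section InnerProductSpace

variable {E : Type*} [NormedAddCommGroup E] [InnerProductSpace ℝ E]

def HasSubgradientAt (f : E → ℝ) (g x : E) : Prop :=
  ∀ y, f y ≥ f x + ⟪g, y - x⟫

lemma HasSubgradientAt.norm_sq_le {f : E → ℝ} {g w p : E} {s R : ℝ}
    (hg : HasSubgradientAt f g w) (hs : 0 < s) (hf : ∀ y, f y ≤ f w + s * (‖y - p‖ ^ 2 - R)) :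
    ‖g‖ ^ 2 ≤ 4 * s * (⟪g, w - p⟫ - s * R) := by
  have hlow := hg (p + (2 * s)⁻¹ • g)
  have hup := hf (p + (2 * s)⁻¹ • g)
  rw [show p + (2 * s)⁻¹ • g - w = (2 * s)⁻¹ • g - (w - p) by abel, inner_sub_right,
    real_inner_smul_right, real_inner_self_eq_norm_sq] at hlow
  rw [add_sub_cancel_left, norm_smul, mul_pow, Real.norm_of_nonneg (by positivity)] at hup
  calc ‖g‖ ^ 2 = 4 * s * ((2 * s)⁻¹ * ‖g‖ ^ 2 - s * ((2 * s)⁻¹ ^ 2 * ‖g‖ ^ 2)) := by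
        field_simp; ring
    _ ≤ 4 * s * (⟪g, w - p⟫ - s * R) :=
        mul_le_mul_of_nonneg_left (by linarith) (by positivity)

lemma norm_add_smul_sub_smul_sq_add_le {d e g : E} {s R R' k : ℝ} (hs : 0 < s) (hk : 0 ≤ k)
    (hg : ‖g‖ ^ 2 ≤ 4 * s * (⟪g, d⟫ - s * R)) (he : s * (R - R') ≤ ⟪g, e⟫) :
    ‖d + k • e - (1 / (2 * s)) • g‖ ^ 2 + (k + 1) * R ≤ ‖d + k • e‖ ^ 2 + k * R' := by
  rw [norm_sub_sq_real, inner_smul_right, inner_add_left, real_inner_smul_left, norm_smul,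
    mul_pow, Real.norm_of_nonneg (by positivity), real_inner_comm g d, real_inner_comm g e]
  have hsq : (1 / (2 * s)) ^ 2 * ‖g‖ ^ 2 ≤ 2 * (1 / (2 * s)) * ⟪g, d⟫ - R :=
    calc (1 / (2 * s)) ^ 2 * ‖g‖ ^ 2 ≤ (1 / (2 * s)) ^ 2 * (4 * s * (⟪g, d⟫ - s * R)) := by
          gcongr
      _ = 2 * (1 / (2 * s)) * ⟪g, d⟫ - R := by field_simp; ring
  have hmom : k * (R - R') ≤ 2 * (1 / (2 * s)) * (k * ⟪g, e⟫) :=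
    calc k * (R - R') = k / s * (s * (R - R')) := by field_simp
      _ ≤ k / s * ⟪g, e⟫ := by gcongr
      _ = 2 * (1 / (2 * s)) * (k * ⟪g, e⟫) := by field_simp
  linarith

end InnerProductSpace

structure GrowthProfile (h h' hinv : ℝ → ℝ) : Prop where
  bijOn : BijOn h (Ici 0) (Ici 0)
  strictMonoOn : StrictMonoOn h (Ici 0)
  concaveOn : ConcaveOn ℝ (Ici 0) h
  map_zero : h 0 = 0
  hasDerivAt : ∀ t > (0 : ℝ), HasDerivAt h (h' t) t
  deriv_pos : ∀ t > (0 : ℝ), 0 < h' t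
  invOn : InvOn hinv h (Ici 0) (Ici 0)

namespace GrowthProfile

variable {h h' hinv : ℝ → ℝ} {v : ℝ}

lemma hinv_nonneg (hG : GrowthProfile h h' hinv) (hv : 0 ≤ v) : 0 ≤ hinv v :=
  hG.invOn.1.mapsTo hG.bijOn.surjOn hv

lemma apply_hinv (hG : GrowthProfile h h' hinv) (hv : 0 ≤ v) : h (hinv v) = v :=
  hG.invOn.2 hv

lemma hinv_zero (hG : GrowthProfile h h' hinv) : hinv 0 = 0 := by
  simpa [hG.map_zero] using hG.invOn.1 (le_refl (0 : ℝ))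

lemma hinv_pos (hG : GrowthProfile h h' hinv) (hv : 0 < v) : 0 < hinv v := by
  refine (hG.hinv_nonneg hv.le).lt_of_ne fun h0 => hv.ne ?_
  rw [← hG.apply_hinv hv.le, ← h0, hG.map_zero]

lemma le_tangent (hG : GrowthProfile h h' hinv) {r a : ℝ} (hr : 0 < r) (ha : 0 ≤ a) :
    h a ≤ h r + h' r * (a - r) :=
  hG.concaveOn.le_add_mul_sub_of_hasDerivAt hr.le ha (hG.hasDerivAt r hr)

end GrowthProfile

namespace HeavyBall

variable {E : Type*} [NormedAddCommGroup E] [InnerProductSpace ℝ E]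

def IsRun (f : E → ℝ) (h' hinv : ℝ → ℝ) (fstar : ℝ) (m : ℕ) (x g : ℕ → E) (γ : ℕ → ℝ) :
    Prop :=
  ∀ k, 1 ≤ k → k ≤ m →
    HasSubgradientAt f (g (k - 1)) (x (k - 1)) ∧
    (f (x (k - 1)) = fstar → g (k - 1) = 0) ∧
    γ (k - 1) = (if fstar < f (x (k - 1))
        then 1 / (2 * ((k : ℝ) + 1) * h' (hinv (f (x (k - 1)) - fstar))) else 0) ∧
    x k = x (k - 1) - γ (k - 1) • g (k - 1)
      + ((((k : ℝ) - 1) / ((k : ℝ) + 1)) • (x (k - 1) - x (k - 2)))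

def momentum (x : ℕ → E) (k : ℕ) : E :=
  x k + (k : ℝ) • (x k - x (k - 1))

lemma self_eq_smul_momentum_add_smul (x : ℕ → E) (k : ℕ) :
    x k = (1 / ((k : ℝ) + 1)) • momentum x k + ((k : ℝ) / ((k : ℝ) + 1)) • x (k - 1) := by
  simp only [momentum]
  match_scalars <;> field_simp <;> ring

variable {f : E → ℝ} {h h' hinv : ℝ → ℝ} {fstar : ℝ} {m : ℕ} {x g : ℕ → E} {γ : ℕ → ℝ}

lemma IsRun.momentum_succ (hrun : IsRun f h' hinv fstar m x g γ) {k : ℕ} (hk : k + 1 ≤ m) :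
    momentum x (k + 1) = momentum x k - (((k : ℝ) + 2) * γ k) • g k := by
  have hx := (hrun (k + 1) (by omega) hk).2.2.2
  rw [Nat.add_sub_cancel, show k + 1 - 2 = k - 1 by omega] at hx
  simp only [momentum, hx]
  push_cast
  match_scalars <;> field_simp <;> ring

lemma IsRun.potential_succ_le (hrun : IsRun f h' hinv fstar m x g γ)
    (hG : GrowthProfile h h' hinv) (hmin : ∀ y, fstar ≤ f y) {p : E}
    (hRG : ∀ y, f y - fstar ≤ h (‖y - p‖ ^ 2)) {k : ℕ} (hk : k + 1 ≤ m) :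
    ‖momentum x (k + 1) - p‖ ^ 2 + (k + 1) * hinv (f (x k) - fstar)
      ≤ ‖momentum x k - p‖ ^ 2 + k * hinv (f (x (k - 1)) - fstar) := by
  obtain ⟨hsub, hzero, hγ, -⟩ := hrun (k + 1) (by omega) hk
  rw [Nat.add_sub_cancel] at hsub hzero hγ
  rw [hrun.momentum_succ hk]
  set R := hinv (f (x k) - fstar)
  set R' := hinv (f (x (k - 1)) - fstar)
  have hR' : 0 ≤ R' := hG.hinv_nonneg (sub_nonneg.2 (hmin _))
  rcases (hmin (x k)).eq_or_lt with hmin_eq | hlt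
  · have hR : R = 0 := by simp only [R, ← hmin_eq, sub_self, hG.hinv_zero]
    rw [hzero hmin_eq.symm, hR, smul_zero, sub_zero, mul_zero, add_zero]
    have : 0 ≤ (k : ℝ) * R' := by positivity
    linarith
  have hR : 0 < R := hG.hinv_pos (sub_pos.2 hlt)
  have hs : 0 < h' R := hG.deriv_pos R hR
  have hstep : ((k : ℝ) + 2) * γ k = 1 / (2 * h' R) := by
    rw [hγ, if_pos hlt]; push_cast; field_simp; ring
  have hgrad : ‖g k‖ ^ 2 ≤ 4 * h' R * (⟪g k, x k - p⟫ - h' R * R) := by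
    refine hsub.norm_sq_le hs fun y => ?_
    have := hG.le_tangent hR (sq_nonneg ‖y - p‖)
    rw [hG.apply_hinv (sub_nonneg.2 (hmin _))] at this
    linarith [hRG y]
  have hdescent : h' R * (R - R') ≤ ⟪g k, x k - x (k - 1)⟫ := by
    have := hG.le_tangent hR hR'
    rw [hG.apply_hinv (sub_nonneg.2 (hmin _)), hG.apply_hinv (sub_nonneg.2 (hmin _))] at this
    have hsg := hsub (x (k - 1))
    rw [← neg_sub, inner_neg_right] at hsg
    linarith
  have hdecomp : momentum x k - p = (x k - p) + (k : ℝ) • (x k - x (k - 1)) := by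
    simp only [momentum]; abel
  rw [hstep, sub_right_comm, hdecomp]
  exact norm_add_smul_sub_smul_sq_add_le hs k.cast_nonneg hgrad hdescent

lemma IsRun.potential_le (hrun : IsRun f h' hinv fstar m x g γ)
    (hG : GrowthProfile h h' hinv) (hmin : ∀ y, fstar ≤ f y) {p : E}
    (hRG : ∀ y, f y - fstar ≤ h (‖y - p‖ ^ 2)) {k : ℕ} (hk : k ≤ m) :
    ‖momentum x k - p‖ ^ 2 + k * hinv (f (x (k - 1)) - fstar) ≤ ‖x 0 - p‖ ^ 2 := by
  induction k with
  | zero => simp [momentum]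
  | succ k ih =>
    push_cast
    exact (hrun.potential_succ_le hG hmin hRG hk).trans (ih (by omega))

lemma IsRun.succ_mul_infDist_sq_le (hrun : IsRun f h' hinv fstar m x g γ)
    (hG : GrowthProfile h h' hinv) {κ : ℝ} (hκ : 1 ≤ κ) {X : Set E} (hX : Convex ℝ X)
    {p : E} (hp : p ∈ X) (hmin : ∀ y, fstar ≤ f y)
    (hRG : ∀ z, f z - fstar ≤ h (infDist z X ^ 2))
    (hLG : ∀ z, f z - fstar ≥ h (infDist z X ^ 2 / κ)) :
    ((m : ℝ) + 1) * infDist (x m) X ^ 2 ≤ κ * ‖x 0 - p‖ ^ 2 := by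
  have hdist : ∀ y, infDist y X ≤ ‖y - p‖ := fun y => by
    simpa [dist_eq_norm] using infDist_le_dist_of_mem hp
  have hRGp : ∀ y, f y - fstar ≤ h (‖y - p‖ ^ 2) := fun y =>
    (hRG y).trans <|
      hG.strictMonoOn.monotoneOn (sq_nonneg (infDist y X)) (sq_nonneg ‖y - p‖) <|
        pow_le_pow_left₀ infDist_nonneg (hdist y) 2
  have hpot := hrun.potential_le hG hmin hRGp le_rfl
  set A := ‖momentum x m - p‖
  set B := infDist (x (m - 1)) X
  set R' := hinv (f (x (m - 1)) - fstar)
  have hB : B ^ 2 ≤ κ * R' := by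
    have := hLG (x (m - 1))
    have hgap : 0 ≤ f (x (m - 1)) - fstar := sub_nonneg.2 (hmin _)
    rwa [ge_iff_le, ← hG.apply_hinv hgap,
      hG.strictMonoOn.le_iff_le (by simp only [mem_Ici]; positivity) (hG.hinv_nonneg hgap),
      div_le_iff₀' (by linarith)] at this
  have havg : infDist (x m) X ≤ (A + m * B) / (m + 1) := by
    calc infDist (x m) X
        ≤ 1 / ((m : ℝ) + 1) * infDist (momentum x m) X + m / (m + 1) * B := by
          conv_lhs => rw [self_eq_smul_momentum_add_smul x m]
          exact hX.convexOn_infDist.2 trivial trivial (by positivity) (by positivity)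
            (by field_simp; ring)
      _ ≤ 1 / ((m : ℝ) + 1) * A + m / (m + 1) * B := by gcongr; exact hdist _
      _ = (A + m * B) / (m + 1) := by field_simp
  -- Jensen for `t ↦ t²`: `(A + m B)² ≤ (m + 1) (A² + m B²)`
  have hjensen : ((m : ℝ) + 1) * infDist (x m) X ^ 2 ≤ A ^ 2 + m * B ^ 2 := by
    have hsq := pow_le_pow_left₀ infDist_nonneg havg 2
    rw [div_pow, le_div_iff₀ (by positivity)] at hsq
    nlinarith [mul_nonneg (Nat.cast_nonneg (α := ℝ) m) (sq_nonneg (A - B))]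
  calc ((m : ℝ) + 1) * infDist (x m) X ^ 2 ≤ A ^ 2 + m * B ^ 2 := hjensen
    _ ≤ κ * A ^ 2 + m * (κ * R') := by
        gcongr
        exact le_mul_of_one_le_left (sq_nonneg A) hκ
    _ = κ * (A ^ 2 + m * R') := by ring
    _ ≤ κ * ‖x 0 - p‖ ^ 2 := mul_le_mul_of_nonneg_left hpot (by linarith)

end HeavyBall

theorem heavy_ball_restart_linear_convergence_general
    {E : Type*} [NormedAddCommGroup E] [InnerProductSpace ℝ E]
    (h hinv h' : ℝ → ℝ)
    (hbij : Set.BijOn h (Set.Ici 0) (Set.Ici 0))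
    (hmono : StrictMonoOn h (Set.Ici 0))
    (hconc : ConcaveOn ℝ (Set.Ici 0) h)
    (h0 : h 0 = 0)
    (hderiv : ∀ t > (0 : ℝ), HasDerivAt h (h' t) t)
    (hpos : ∀ t > (0 : ℝ), 0 < h' t)
    (hinvOn : Set.InvOn hinv h (Set.Ici 0) (Set.Ici 0))
    (κ : ℝ) (hκ : 1 ≤ κ)
    (f : E → ℝ) (hconv : ConvexOn ℝ Set.univ f)
    (Xstar : Set E) (hXstar : Xstar = {z | ∀ y, f z ≤ f y}) (hne : Xstar.Nonempty)
    (fstar : ℝ) (hfstar : ∀ z ∈ Xstar, f z = fstar)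
    (hRG : ∀ z, f z - fstar ≤ h (Metric.infDist z Xstar ^ 2))
    (hLG : ∀ z, f z - fstar ≥ h (Metric.infDist z Xstar ^ 2 / κ))
    (x0 : E) (m : ℕ) (hm : m = Nat.floor (κ * Real.exp 1) - 1)
    (z : ℕ → E) (hz0 : z 0 = x0)
    (hstep : ∀ q : ℕ, ∃ (x g : ℕ → E) (γ : ℕ → ℝ),
      x 0 = z q ∧ x m = z (q + 1) ∧
      ∀ k, 1 ≤ k → k ≤ m →
        (∀ y, f y ≥ f (x (k - 1)) + ⟪g (k - 1), y - x (k - 1)⟫) ∧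
        (f (x (k - 1)) = fstar → g (k - 1) = 0) ∧
        γ (k - 1) = (if fstar < f (x (k - 1))
            then 1 / (2 * ((k : ℝ) + 1) * h' (hinv (f (x (k - 1)) - fstar))) else 0) ∧
        x k = x (k - 1) - γ (k - 1) • g (k - 1)
          + ((((k : ℝ) - 1) / ((k : ℝ) + 1)) • (x (k - 1) - x (k - 2)))) :
    ∀ q : ℕ,
      Metric.infDist (z q) Xstar ^ 2
        ≤ (1 - 1 / (κ * Real.exp 1)) ^ (q * m) * Metric.infDist x0 Xstar ^ 2 := by
  have hG : GrowthProfile h h' hinv := ⟨hbij, hmono, hconc, h0, hderiv, hpos, hinvOn⟩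
  have hmin : ∀ y, fstar ≤ f y := by
    obtain ⟨w, hw⟩ := hne
    rw [← hfstar w hw]
    rwa [hXstar] at hw
  have hX : Convex ℝ Xstar := hXstar ▸ hconv.convex_setOf_forall_le
  have hn : 1 < κ * exp 1 := one_lt_mul_of_le_of_lt hκ (one_lt_exp_iff.2 one_pos)
  have hρ : 0 ≤ 1 - 1 / (κ * exp 1) := by
    rw [sub_nonneg, div_le_one (by linarith)]; exact hn.le
  have hκρ : κ ≤ (m + 1) * (1 - 1 / (κ * exp 1)) ^ m := by
    simpa [mul_assoc, ← exp_add] using mul_exp_neg_one_le_succ_mul_one_sub_inv_pow hn hm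
  have hcontract : ∀ q, infDist (z (q + 1)) Xstar ^ 2
      ≤ (1 - 1 / (κ * exp 1)) ^ m * infDist (z q) Xstar ^ 2 := fun q => by
    obtain ⟨x, g, γ, hx0, hxm, hrun⟩ := hstep q
    have hepoch :
        ((m : ℝ) + 1) * infDist (z (q + 1)) Xstar ^ 2 ≤ κ * infDist (z q) Xstar ^ 2 := by
      refine le_mul_infDist_sq hne (by linarith) fun p hp => ?_
      rw [← hxm, ← hx0, dist_eq_norm]
      exact HeavyBall.IsRun.succ_mul_infDist_sq_le hrun hG hκ hX hp hmin hRG hLG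
    refine le_of_mul_le_mul_left (hepoch.trans ?_) (by positivity : (0 : ℝ) < m + 1)
    exact (mul_le_mul_of_nonneg_right hκρ (sq_nonneg _)).trans_eq (by ring)
  intro q
  rw [← hz0, pow_mul']
  exact le_geom (u := fun q => infDist (z q) Xstar ^ 2) (pow_nonneg hρ m) q
    fun k _ => hcontract k

theorem heavy_ball_restart_linear_convergence
    {E : Type*} [NormedAddCommGroup E] [InnerProductSpace ℝ E] [FiniteDimensional ℝ E]
    (h hinv h' : ℝ → ℝ)
    (hbij : Set.BijOn h (Set.Ici 0) (Set.Ici 0))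
    (hmono : StrictMonoOn h (Set.Ici 0))
    (hconc : ConcaveOn ℝ (Set.Ici 0) h)
    (h0 : h 0 = 0)
    (hderiv : ∀ t > (0 : ℝ), HasDerivAt h (h' t) t)
    (hpos : ∀ t > (0 : ℝ), 0 < h' t)
    (hinvOn : Set.InvOn hinv h (Set.Ici 0) (Set.Ici 0))
    (κ : ℝ) (hκ : 1 ≤ κ)
    (f : E → ℝ) (hconv : ConvexOn ℝ Set.univ f)
    (Xstar : Set E) (hXstar : Xstar = {z | ∀ y, f z ≤ f y}) (hne : Xstar.Nonempty)
    (fstar : ℝ) (hfstar : ∀ z ∈ Xstar, f z = fstar)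
    (hRG : ∀ z, f z - fstar ≤ h (Metric.infDist z Xstar ^ 2))
    (hLG : ∀ z, f z - fstar ≥ h (Metric.infDist z Xstar ^ 2 / κ))
    (x0 : E) (m : ℕ) (hm : m = Nat.floor (κ * Real.exp 1) - 1) (hm1 : 1 ≤ m)
    (z : ℕ → E) (hz0 : z 0 = x0)
    (hstep : ∀ q : ℕ, ∃ (x g : ℕ → E) (γ : ℕ → ℝ),
      x 0 = z q ∧ x m = z (q + 1) ∧
      ∀ k, 1 ≤ k → k ≤ m →
        (∀ y, f y ≥ f (x (k - 1)) + ⟪g (k - 1), y - x (k - 1)⟫) ∧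
        (f (x (k - 1)) = fstar → g (k - 1) = 0) ∧
        γ (k - 1) = (if fstar < f (x (k - 1))
            then 1 / (2 * ((k : ℝ) + 1) * h' (hinv (f (x (k - 1)) - fstar))) else 0) ∧
        x k = x (k - 1) - γ (k - 1) • g (k - 1)
          + ((((k : ℝ) - 1) / ((k : ℝ) + 1)) • (x (k - 1) - x (k - 2)))) :
    ∀ q : ℕ,
      Metric.infDist (z q) Xstar ^ 2
        ≤ (1 - 1 / (κ * Real.exp 1)) ^ (q * m) * Metric.infDist x0 Xstar ^ 2 :=
  heavy_ball_restart_linear_convergence_general h hinv h' hbij hmono hconc h0 hderiv hpos hinvOn κ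
    hκ f hconv Xstar hXstar hne fstar hfstar hRG hLG x0 m hm z hz0 hstep
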